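/- arXiv:2107.01594 — 2 statements merged into one kernel-verified Lean document; each statement's English description precedes it below -/
import Mathlib

section
/- If a relation > on a set M is wellfounded (Noetherian), then its list extension on finite lists M* is also wellfounded, where the list extension is the smallest transitive relation closed under congruence (replacing a sublist by a smaller one inside any context) such that a singleton list (n) is greater than any finite list all of whose elements are smaller than n. -/
/-- The list extension `>_L` of a relation (here phrased via the "smaller than"
relation `lt`, so `ListExt lt l l'` means `l' >_L l`): the smallest transitive
relation closed under congruence such that a singleton list `[n]` is greater
than any finite list all of whose elements are smaller than `n`. -/
inductive ListExt {M : Type*} (lt : M → M → Prop) : List M → List M → Prop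
  | single {n : M} {l : List M} : (∀ m ∈ l, lt m n) → ListExt lt l [n]
  | ctx {k l m n : List M} : ListExt lt m n → ListExt lt (k ++ m ++ l) (k ++ n ++ l)
  | trans {a b c : List M} : ListExt lt a b → ListExt lt b c → ListExt lt a c

/-!
Sending a list to its multiset of entries turns every step of the list extension into a chain of
Dershowitz–Manna steps `Relation.CutExpand lt` (remove one element, add finitely many smaller
ones); that multiset relation is wellfounded whenever `lt` is (`WellFounded.cutExpand`).
-/

open Relation

theorem transGen_cutExpand_of_listExt {M : Type*} {lt : M → M → Prop} {l l' : List M}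
    (h : ListExt lt l l') : TransGen (CutExpand lt) (l : Multiset M) l' := by
  induction h with
  | single hl => exact .single (cutExpand_singleton hl)
  | @ctx k l m n _ ih =>
    simpa only [← Multiset.coe_add] using
      ih.lift (fun s => (k : Multiset M) + s + l)
        fun _ _ hs => (cutExpand_add_right _).2 ((cutExpand_add_left _).2 hs)
  | trans _ _ ih₁ ih₂ => exact ih₁.trans ih₂

/-- If a relation `>` on a set `M` is wellfounded (Noetherian), then
its list extension on finite lists `M*` is also wellfounded. -/
theorem wellFounded_listExt {M : Type*} (lt : M → M → Prop)
    (h : WellFounded lt) : WellFounded (ListExt lt) :=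
  Subrelation.wf transGen_cutExpand_of_listExt
    (InvImage.wf (fun l : List M => (l : Multiset M)) h.cutExpand.transGen)
end

section
/- Generalised Newman lemma (Winkler–Buchberger to Church–Rosser): Let Σ be a generalised 2-polygraph that is terminating (equipped with a transitive Noetherian order > on objects such that every reduction step x ⤳ y implies x > y) and closed under congruence. If Σ has a Winkler–Buchberger structure, i.e., for every local peak y ⬿ x ⤳ z a rewrite zig-zag to some zig-zag from y to z all of whose intermediate objects are below x, then Σ has a Church–Rosser structure: every reduction zig-zag u from y to z can be rewritten into a valley y ⤳* x' ⬿* z. -/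
/-!
Noetherian induction on the multiset of objects visited by a zig-zag, ordered by the multiset
extension of `>` (the transitive closure of `Relation.CutExpand`, well-founded because `>` is).
A zig-zag that is not a valley contains a local peak `a ⬿ b ⤳ c`. Rewriting that peak into the
Winkler–Buchberger zig-zag, whiskered by congruence closure, replaces the objects `a, b` of the
peak by objects all below `b` (the first of them being `a` itself), so the multiset decreases.
-/

universe u v w

/-- Reduction sequences over a proof-relevant relation `R`: the inductive
reflexive-transitive closure. -/
inductive RSeq {A : Type u} (R : A → A → Type v) : A → A → Type (max u v)
  | nil (x : A) : RSeq R x x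
  | cons {x y z : A} : R x y → RSeq R y z → RSeq R x z

namespace RSeq

variable {A : Type u} {R : A → A → Type v}

/-- Concatenation of sequences. -/
def comp : ∀ {x y z : A}, RSeq R x y → RSeq R y z → RSeq R x z
  | _, _, _, .nil _, t => t
  | _, _, _, .cons s u, t => .cons s (comp u t)

/-- The length (number of steps) of a sequence. -/
def length : ∀ {x y : A}, RSeq R x y → Nat
  | _, _, .nil _ => 0
  | _, _, .cons _ u => u.length + 1

/-- The list of all objects visited by a sequence (including endpoints). -/
def objs : ∀ {x y : A}, RSeq R x y → List A
  | x, _, .nil _ => [x]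
  | x, _, .cons _ u => x :: objs u

/-- The inner (intermediate) objects of a sequence: all objects except the
first and the last. -/
def inner {x y : A} (u : RSeq R x y) : List A := (objs u).tail.dropLast

end RSeq

/-- The symmetric closure of a proof-relevant relation. -/
def RSym {A : Type u} (R : A → A → Type v) (x y : A) : Type v := Sum (R x y) (R y x)

/-- Inversion of a single symmetric-closure step. -/
def RSym.inv {A : Type u} {R : A → A → Type v} {x y : A} : RSym R x y → RSym R y x
  | .inl s => .inr s
  | .inr s => .inl s

/-- Reduction zig-zags: the symmetric-reflexive-transitive closure of `R`. -/
abbrev ZigZag {A : Type u} (R : A → A → Type v) (x y : A) : Type (max u v) :=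
  RSeq (RSym R) x y

/-- Inversion of a zig-zag. -/
def ZigZag.inv {A : Type u} {R : A → A → Type v} : ∀ {x y : A}, ZigZag R x y → ZigZag R y x
  | _, _, .nil x => .nil x
  | _, _, .cons s u => RSeq.comp (ZigZag.inv u) (.cons (RSym.inv s) (.nil _))

/-- The embedding of reduction sequences into zig-zags as positive zig-zags. -/
def RSeq.fwd {A : Type u} {R : A → A → Type v} : ∀ {x y : A}, RSeq R x y → ZigZag R x y
  | _, _, .nil x => .nil x
  | _, _, .cons s u => .cons (Sum.inl s) (RSeq.fwd u)

/-- The local peak `y ⬿ x ⤳ z` determined by two reduction steps out of `x`,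
viewed as a zig-zag from `y` to `z`. -/
def ZigZag.peak {A : Type u} {R : A → A → Type v} {x y z : A}
    (s : R x y) (t : R x z) : ZigZag R y z :=
  .cons (Sum.inr s) (.cons (Sum.inl t) (.nil z))

/-- Rewrite zig-zags `u ⇔* v` between parallel reduction zig-zags, relative to a
family `R2` of rewrite steps: the symmetric-reflexive-transitive closure of `R2`. -/
abbrev RW {A : Type u} {R : A → A → Type v}
    (R2 : ∀ (x y : A), ZigZag R x y → ZigZag R x y → Type w)
    {x y : A} (u v : ZigZag R x y) : Type (max u v w) :=
  RSeq (RSym (R2 x y)) u v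

namespace Relation

variable {α : Type*} {r : α → α → Prop}

theorem transGen_cutExpand_add_pair {s t : Multiset α} {a b : α} (h : ∀ x ∈ t, r x b) :
    TransGen (CutExpand r) (s + t) (s + {a, b}) := by
  have replace_b : CutExpand r (s + t) (s + {b}) :=
    (cutExpand_add_left s).mpr (cutExpand_singleton h)
  have remove_a : CutExpand r (s + {b}) (s + {a, b}) := by
    have := (cutExpand_add_left (r := r) (s + {b})).mpr (cutExpand_zero (x := a))
    rwa [add_zero, add_assoc, add_comm ({b} : Multiset α), Multiset.singleton_add] at this
  exact .tail (.single replace_b) remove_a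

end Relation

namespace RSeq

variable {A : Type u} {R : A → A → Type v}

theorem objs_ne_nil : ∀ {x y : A} (u : RSeq R x y), u.objs ≠ []
  | _, _, .nil _ => List.cons_ne_nil _ _
  | _, _, .cons _ _ => List.cons_ne_nil _ _

theorem objs_comp : ∀ {x y z : A} (u : RSeq R x y) (v : RSeq R y z),
    (u.comp v).objs = u.objs.dropLast ++ v.objs
  | _, _, _, .nil _, _ => rfl
  | _, _, _, .cons _ u, v => by
    rw [comp, objs, objs, objs_comp u v, List.dropLast_cons_of_ne_nil (objs_ne_nil u)]
    rfl

theorem dropLast_objs_subset : ∀ {x y : A} (u : RSeq R x y), u.objs.dropLast ⊆ x :: u.inner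
  | _, _, .nil _ => List.nil_subset _
  | _, _, .cons _ u => by
    rw [objs, List.dropLast_cons_of_ne_nil (objs_ne_nil u)]
    exact List.cons_subset_cons _ (List.Subset.refl _)

theorem fwd_comp_single_inv {x y z : A} (q : RSeq R x y) (s : R y z) :
    (q.comp (.cons s (.nil z))).fwd.inv = .cons (.inr s) q.fwd.inv := by
  induction q with
  | nil => rfl
  | cons r q ih =>
    show RSeq.comp (q.comp (.cons s (.nil z))).fwd.inv _ = _
    rw [ih]
    rfl

end RSeq

namespace ZigZag

variable {A : Type u} {R : A → A → Type v}

def IsValley {y z : A} (u : ZigZag R y z) : Prop :=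
  ∃ (x' : A) (p : RSeq R y x') (q : RSeq R z x'), u = p.fwd.comp q.fwd.inv

def HasPeak {y z : A} (u : ZigZag R y z) : Prop :=
  ∃ (a b c : A) (u₁ : ZigZag R y a) (s : R b a) (t : R b c) (u₂ : ZigZag R c z),
    u = u₁.comp ((peak s t).comp u₂)

theorem isValley_or_hasPeak {y z : A} (u : ZigZag R y z) : u.IsValley ∨ u.HasPeak := by
  induction u with
  | nil x => exact .inl ⟨x, .nil x, .nil x, rfl⟩
  | cons st u ih =>
    rcases st with s | s
    · rcases ih with ⟨x', p, q, rfl⟩ | ⟨a, b, c, u₁, s', t, u₂, rfl⟩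
      · exact .inl ⟨x', .cons s p, q, rfl⟩
      · exact .inr ⟨a, b, c, .cons (.inl s) u₁, s', t, u₂, rfl⟩
    · rcases ih with ⟨x', p, q, rfl⟩ | ⟨a, b, c, u₁, s', t, u₂, rfl⟩
      · cases p with
        | nil =>
          exact .inl ⟨_, .nil _, q.comp (.cons s (.nil _)), by rw [RSeq.fwd_comp_single_inv]; rfl⟩
        | cons r p => exact .inr ⟨_, _, _, .nil _, s, r, p.fwd.comp q.fwd.inv, rfl⟩
      · exact .inr ⟨a, b, c, .cons (.inr s) u₁, s', t, u₂, rfl⟩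

end ZigZag

namespace ZigZag.HasPeak

variable {A : Type u} {R : A → A → Type v}
  {R2 : ∀ (x y : A), ZigZag R x y → ZigZag R x y → Type w} {gt : A → A → Prop}

theorem exists_rw_transGen_cutExpand (step_gt : ∀ {x y : A}, R x y → gt x y)
    (congrClosed : ∀ {x y y' z : A} (u : ZigZag R x y) (v : ZigZag R y' z)
      {p q : ZigZag R y y'}, RW R2 p q →
      RW R2 (u.comp (p.comp v)) (u.comp (q.comp v)))
    (wb : ∀ {x y z : A} (s : R x y) (t : R x z),
      Σ (p : ZigZag R y z),
        PProd (∀ m ∈ RSeq.inner p, gt x m) (RW R2 (ZigZag.peak s t) p))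
    {y z : A} {u : ZigZag R y z} (hu : u.HasPeak) :
    ∃ v : ZigZag R y z, Nonempty (RW R2 u v) ∧
      Relation.TransGen (Relation.CutExpand fun a b => gt b a) (v.objs : Multiset A) u.objs := by
  obtain ⟨a, b, c, u₁, s, t, u₂, rfl⟩ := hu
  obtain ⟨p, below_apex, hp⟩ := wb s t
  refine ⟨u₁.comp (p.comp u₂), ⟨congrClosed u₁ u₂ hp⟩, ?_⟩
  have below_b : ∀ m ∈ (p.objs.dropLast : Multiset A), gt b m := fun m hm => by
    rcases List.mem_cons.mp (p.dropLast_objs_subset (Multiset.mem_coe.mp hm)) with rfl | hm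
    exacts [step_gt s, below_apex m hm]
  convert Relation.transGen_cutExpand_add_pair (r := fun a b => gt b a)
    (s := u₁.objs.dropLast + u₂.objs) (a := a) below_b using 1
  · simp only [RSeq.objs_comp, ← Multiset.coe_add]
    abel
  · simp only [RSeq.objs_comp, peak, RSeq.objs, List.dropLast_cons_cons, List.dropLast_singleton,
      ← Multiset.coe_add]
    rw [add_assoc, add_comm (u₂.objs : Multiset A)]
    rfl

end ZigZag.HasPeak

theorem wb_to_churchRosser_general {A : Type u} (R : A → A → Type v)
    (R2 : ∀ (x y : A), ZigZag R x y → ZigZag R x y → Type w)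
    -- terminating: a transitive Noetherian order `>` compatible with reduction steps
    (gt : A → A → Prop)
    (gt_noeth : WellFounded (fun a b => gt b a))
    (step_gt : ∀ {x y : A}, R x y → gt x y)
    -- closed under congruence: rewrite zig-zags can be whiskered by reduction zig-zags
    (congrClosed : ∀ {x y y' z : A} (u : ZigZag R x y) (v : ZigZag R y' z)
      {p q : ZigZag R y y'}, RW R2 p q →
      RW R2 (u.comp (p.comp v)) (u.comp (q.comp v)))
    -- Winkler–Buchberger structure: every local peak rewrites to a zig-zag all of
    -- whose intermediate objects are below the apex
    (wb : ∀ {x y z : A} (s : R x y) (t : R x z),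
      Σ (p : ZigZag R y z),
        PProd (∀ m ∈ RSeq.inner p, gt x m) (RW R2 (ZigZag.peak s t) p)) :
    ∀ {y z : A} (u : ZigZag R y z),
      Nonempty (Σ (x' : A) (p : RSeq R y x') (q : RSeq R z x'),
        RW R2 u (p.fwd.comp q.fwd.inv)) := by
  suffices h : ∀ M : Multiset A, ∀ {y z : A} (u : ZigZag R y z), (u.objs : Multiset A) = M →
      Nonempty (Σ (x' : A) (p : RSeq R y x') (q : RSeq R z x'),
        RW R2 u (p.fwd.comp q.fwd.inv)) from fun {_ _} u => h _ u rfl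
  intro M
  induction M using gt_noeth.cutExpand.transGen.induction with
  | _ M ih =>
  rintro y z u rfl
  rcases u.isValley_or_hasPeak with ⟨x', p, q, rfl⟩ | hu
  · exact ⟨⟨x', p, q, .nil _⟩⟩
  · obtain ⟨v, ⟨huv⟩, hvu⟩ := hu.exists_rw_transGen_cutExpand step_gt congrClosed wb
    obtain ⟨⟨x', p, q, hv⟩⟩ := ih _ hvu v rfl
    exact ⟨⟨x', p, q, huv.comp hv⟩⟩

/-- Generalised Newman lemma (Winkler–Buchberger to Church–Rosser):
a terminating generalised 2-polygraph which is closed under congruence and has a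
Winkler–Buchberger structure admits a Church–Rosser structure: every reduction
zig-zag `u` from `y` to `z` can be rewritten into a valley `y ⤳* x' ⬿* z`. -/
theorem wb_to_churchRosser {A : Type u} (R : A → A → Type v)
    (R2 : ∀ (x y : A), ZigZag R x y → ZigZag R x y → Type w)
    -- terminating: a transitive Noetherian order `>` compatible with reduction steps
    (gt : A → A → Prop) (gt_trans : Transitive gt)
    (gt_noeth : WellFounded (fun a b => gt b a))
    (step_gt : ∀ {x y : A}, R x y → gt x y)
    -- closed under congruence: rewrite zig-zags can be whiskered by reduction zig-zags
    (congrClosed : ∀ {x y y' z : A} (u : ZigZag R x y) (v : ZigZag R y' z)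
      {p q : ZigZag R y y'}, RW R2 p q →
      RW R2 (u.comp (p.comp v)) (u.comp (q.comp v)))
    -- Winkler–Buchberger structure: every local peak rewrites to a zig-zag all of
    -- whose intermediate objects are below the apex
    (wb : ∀ {x y z : A} (s : R x y) (t : R x z),
      Σ (p : ZigZag R y z),
        PProd (∀ m ∈ RSeq.inner p, gt x m) (RW R2 (ZigZag.peak s t) p)) :
    ∀ {y z : A} (u : ZigZag R y z),
      Nonempty (Σ (x' : A) (p : RSeq R y x') (q : RSeq R z x'),
        RW R2 u (p.fwd.comp q.fwd.inv)) :=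
  wb_to_churchRosser_general R R2 gt gt_noeth step_gt congrClosed wb
end
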